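/- For every k ≥ 1, the normalized Olshanetsky–Perelomov operator P_k satisfies the Leibniz rule on symmetric polynomials: if f and g are symmetric polynomials in ℚ[x₁,…,xₙ], then P_k(f·g) = P_k(f)·g + f·P_k(g). -/

import Mathlib

/-!
Each divided difference `p ↦ (s_{ij}p − p)/(x_i − x_j)` is additive and commutes with
multiplication by symmetric polynomials, since these are fixed by `s_{ij}`. Both properties pass
to sums and iterates, hence to every `𝔇_i^{k−1}`; applying `𝔇_i^{k−1}` to the Leibniz rule for
`∂/∂x_i` and summing over `i` gives the Leibniz rule for `P_k`.
-/

open MvPolynomial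

namespace MvPolynomial

variable {σ R : Type*}

structure IsLinearOverSymmetric [CommSemiring R] (T : MvPolynomial σ R → MvPolynomial σ R) :
    Prop where
  map_add : ∀ p q, T (p + q) = T p + T q
  map_mul_of_isSymmetric : ∀ p {h : MvPolynomial σ R}, h.IsSymmetric → T (p * h) = T p * h

namespace IsLinearOverSymmetric

variable [CommSemiring R]

theorem sum {ι : Type*} {s : Finset ι} {T : ι → MvPolynomial σ R → MvPolynomial σ R}
    (hT : ∀ j ∈ s, IsLinearOverSymmetric (T j)) :
    IsLinearOverSymmetric fun p => ∑ j ∈ s, T j p where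
  map_add p q := by
    rw [← Finset.sum_add_distrib]
    exact Finset.sum_congr rfl fun j hj => (hT j hj).map_add p q
  map_mul_of_isSymmetric p h hh := by
    rw [Finset.sum_mul]
    exact Finset.sum_congr rfl fun j hj => (hT j hj).map_mul_of_isSymmetric p hh

theorem iterate {T : MvPolynomial σ R → MvPolynomial σ R} (hT : IsLinearOverSymmetric T) :
    ∀ m : ℕ, IsLinearOverSymmetric T^[m]
  | 0 => ⟨fun _ _ => rfl, fun _ _ _ => rfl⟩
  | m + 1 => by
    refine ⟨fun p q => ?_, fun p h hh => ?_⟩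
    · rw [Function.iterate_succ_apply, hT.map_add, (hT.iterate m).map_add,
        Function.iterate_succ_apply, Function.iterate_succ_apply]
    · rw [Function.iterate_succ_apply, hT.map_mul_of_isSymmetric p hh,
        (hT.iterate m).map_mul_of_isSymmetric _ hh, Function.iterate_succ_apply]

theorem map_add_mul {T : MvPolynomial σ R → MvPolynomial σ R} (hT : IsLinearOverSymmetric T)
    {f g : MvPolynomial σ R} (hf : f.IsSymmetric) (hg : g.IsSymmetric) (a b : MvPolynomial σ R) :
    T (a * g + f * b) = T a * g + f * T b := by
  rw [hT.map_add, hT.map_mul_of_isSymmetric a hg, mul_comm f, hT.map_mul_of_isSymmetric b hf,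
    mul_comm (T b)]

end IsLinearOverSymmetric

theorem X_sub_X_ne_zero [CommRing R] [Nontrivial R] {i j : σ} (hij : i ≠ j) :
    (X i - X j : MvPolynomial σ R) ≠ 0 :=
  sub_ne_zero.mpr fun h => hij (X_injective h)

theorem isLinearOverSymmetric_of_X_sub_X_mul [CommRing R] [IsDomain R] [DecidableEq σ]
    {i j : σ} (hij : i ≠ j) {Δ : MvPolynomial σ R → MvPolynomial σ R}
    (hΔ : ∀ p, (X i - X j) * Δ p = rename (Equiv.swap i j) p - p) :
    IsLinearOverSymmetric Δ where
  map_add p q := mul_left_cancel₀ (X_sub_X_ne_zero hij) <| by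
    rw [hΔ, map_add, mul_add, hΔ, hΔ]
    ring
  map_mul_of_isSymmetric p h hh := mul_left_cancel₀ (X_sub_X_ne_zero hij) <| by
    rw [hΔ, map_mul, hh (Equiv.swap i j), ← mul_assoc, hΔ, sub_mul]

end MvPolynomial

theorem OP_hamiltonian_leibniz_general (n : ℕ)
    (Δ : Fin n → Fin n → MvPolynomial (Fin n) ℚ → MvPolynomial (Fin n) ℚ)
    (hΔ : ∀ i j p, (X i - X j) * Δ i j p = rename (Equiv.swap i j) p - p)
    (D : Fin n → MvPolynomial (Fin n) ℚ → MvPolynomial (Fin n) ℚ)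
    (hD : ∀ i p, D i p = ∑ j ∈ Finset.univ.erase i, Δ i j p)
    (P : ℕ → MvPolynomial (Fin n) ℚ → MvPolynomial (Fin n) ℚ)
    (hP : ∀ k f, P k f = ∑ i : Fin n, (D i)^[k - 1] (pderiv i f))
    (k : ℕ)
    (f g : MvPolynomial (Fin n) ℚ) (hf : f.IsSymmetric) (hg : g.IsSymmetric) :
    P k (f * g) = P k f * g + f * P k g := by
  have hD_linear (i : Fin n) : IsLinearOverSymmetric (D i) := by
    rw [show D i = _ from funext (hD i)]
    exact IsLinearOverSymmetric.sum fun j hj =>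
      isLinearOverSymmetric_of_X_sub_X_mul (Finset.ne_of_mem_erase hj).symm (hΔ i j)
  rw [hP, hP, hP, Finset.sum_mul, Finset.mul_sum, ← Finset.sum_add_distrib]
  refine Finset.sum_congr rfl fun i _ => ?_
  rw [pderiv_mul, ((hD_linear i).iterate (k - 1)).map_add_mul hf hg]

/-- The normalized Olshanetsky–Perelomov operator
`P_k(f) = ∑_i 𝔇_i^{k−1}(∂f/∂x_i)`, built from the degenerate Dunkl operators
`𝔇_i(p) = ∑_{j≠i} (s_{ij}p − p)/(x_i − x_j)`, satisfies the Leibniz rule on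
symmetric polynomials: `P_k(f·g) = P_k(f)·g + f·P_k(g)`. -/
theorem OP_hamiltonian_leibniz (n : ℕ) (hn : 1 ≤ n)
    (Δ : Fin n → Fin n → MvPolynomial (Fin n) ℚ → MvPolynomial (Fin n) ℚ)
    (hΔ : ∀ i j p, (X i - X j) * Δ i j p = rename (Equiv.swap i j) p - p)
    (D : Fin n → MvPolynomial (Fin n) ℚ → MvPolynomial (Fin n) ℚ)
    (hD : ∀ i p, D i p = ∑ j ∈ Finset.univ.erase i, Δ i j p)
    (P : ℕ → MvPolynomial (Fin n) ℚ → MvPolynomial (Fin n) ℚ)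
    (hP : ∀ k f, P k f = ∑ i : Fin n, (D i)^[k - 1] (pderiv i f))
    (k : ℕ) (hk : 1 ≤ k)
    (f g : MvPolynomial (Fin n) ℚ) (hf : f.IsSymmetric) (hg : g.IsSymmetric) :
    P k (f * g) = P k f * g + f * P k g :=
  OP_hamiltonian_leibniz_general n Δ hΔ D hD P hP k f g hf hg
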